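/- arXiv:math/0608082 — 6 statements merged into one kernel-verified Lean document; each statement's English description precedes it below -/
import Mathlib

section
/- Let δ, C > 0 and let u, v : (−δ, δ) → ℝ be convex functions such that |u(s) − v(s)| ≤ C·s² for all s ∈ (−δ, δ). Then u attains a minimum at s = 0 (i.e., u(s) ≥ u(0) for all s ∈ (−δ, δ)) if and only if v attains a minimum at s = 0. In particular, u(0) = v(0). -/
lemma critical_aux {δ C : ℝ} (hδ : 0 < δ) (hC : 0 < C)
    (u v : ℝ → ℝ)
    (hv : ConvexOn ℝ (Set.Ioo (-δ) δ) v)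
    (hbd : ∀ s ∈ Set.Ioo (-δ) δ, |u s - v s| ≤ C * s ^ 2)
    (hmin : ∀ s ∈ Set.Ioo (-δ) δ, u 0 ≤ u s) :
    ∀ s ∈ Set.Ioo (-δ) δ, v 0 ≤ v s := by
  have h0 : (0 : ℝ) ∈ Set.Ioo (-δ) δ := by constructor <;> simp [hδ]
  have huv0 : u 0 = v 0 := by
    have := hbd 0 h0
    simp at this
    linarith [abs_nonneg (u 0 - v 0), abs_sub_abs_le_abs_sub (u 0) (v 0),
      le_abs_self (u 0 - v 0), neg_abs_le (u 0 - v 0)]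
  by_contra hcon
  push_neg at hcon
  obtain ⟨s₀, hs₀, hlt⟩ := hcon
  set ε := v 0 - v s₀ with hε
  have hεpos : 0 < ε := by simp [hε]; linarith
  have hs₀ne : s₀ ≠ 0 := by
    rintro rfl
    simp [hε] at hεpos
  have hsq : 0 < C * s₀ ^ 2 := by positivity
  set t : ℝ := min (1/2) (ε / (2 * (C * s₀ ^ 2))) with ht
  have htpos : 0 < t := by
    apply lt_min (by norm_num)
    positivity
  have ht1 : t ≤ 1 := le_trans (min_le_left _ _) (by norm_num)
  have ht2 : t ≤ ε / (2 * (C * s₀ ^ 2)) := min_le_right _ _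
  have hp : t * s₀ ∈ Set.Ioo (-δ) δ := by
    have habs : |t * s₀| < δ := by
      rw [abs_mul]
      have h1 : |s₀| < δ := abs_lt.mpr ⟨hs₀.1, hs₀.2⟩
      have h2 : |t| ≤ 1 := by rw [abs_of_pos htpos]; exact ht1
      calc |t| * |s₀| ≤ 1 * |s₀| := by
            apply mul_le_mul_of_nonneg_right h2 (abs_nonneg _)
        _ = |s₀| := by ring
        _ < δ := h1
    exact ⟨neg_lt_of_abs_lt habs, lt_of_abs_lt habs⟩
  -- convexity at p = (1-t)·0 + t·s₀
  have hconv : v (t * s₀) ≤ (1 - t) * v 0 + t * v s₀ := by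
    have := hv.2 h0 hs₀ (by linarith : (0:ℝ) ≤ 1 - t) (le_of_lt htpos)
      (by ring : (1 - t) + t = 1)
    simpa using this
  have hub : u (t * s₀) ≤ v (t * s₀) + C * (t * s₀) ^ 2 := by
    have := hbd (t * s₀) hp
    have := abs_le.mp this
    linarith [this.2]
  have hlb : u 0 ≤ u (t * s₀) := hmin _ hp
  -- combine
  have key : v 0 ≤ v 0 - t * ε + C * t ^ 2 * s₀ ^ 2 := by
    have : v 0 = u 0 := huv0.symm
    nlinarith [hconv, hub, hlb]
  have h1 : t * ε ≤ C * t ^ 2 * s₀ ^ 2 := by linarith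
  have h2 : ε ≤ C * t * s₀ ^ 2 := by
    have := mul_le_mul_of_nonneg_left h1 (le_of_lt (inv_pos.mpr htpos))
    calc ε = t⁻¹ * (t * ε) := by field_simp
      _ ≤ t⁻¹ * (C * t ^ 2 * s₀ ^ 2) := this
      _ = C * t * s₀ ^ 2 := by field_simp
  have h3 : C * t * s₀ ^ 2 ≤ ε / 2 := by
    have := mul_le_mul_of_nonneg_right ht2 (le_of_lt hsq)
    calc C * t * s₀ ^ 2 = t * (C * s₀ ^ 2) := by ring
      _ ≤ ε / (2 * (C * s₀ ^ 2)) * (C * s₀ ^ 2) := this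
      _ = ε / 2 := by field_simp
  linarith

/-- Let δ, C > 0 and let u, v : (−δ, δ) → ℝ be convex functions such that
|u(s) − v(s)| ≤ C·s² for all s ∈ (−δ, δ). Then u attains a minimum at s = 0
(i.e., u(s) ≥ u(0) for all s ∈ (−δ, δ)) if and only if v attains a minimum at s = 0.
In particular, u(0) = v(0). -/
theorem critical_point_well_defined {δ C : ℝ} (hδ : 0 < δ) (hC : 0 < C)
    (u v : ℝ → ℝ)
    (hu : ConvexOn ℝ (Set.Ioo (-δ) δ) u)
    (hv : ConvexOn ℝ (Set.Ioo (-δ) δ) v)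
    (hbd : ∀ s ∈ Set.Ioo (-δ) δ, |u s - v s| ≤ C * s ^ 2) :
    ((∀ s ∈ Set.Ioo (-δ) δ, u 0 ≤ u s) ↔ (∀ s ∈ Set.Ioo (-δ) δ, v 0 ≤ v s)) ∧
      u 0 = v 0 := by
  have h0 : (0 : ℝ) ∈ Set.Ioo (-δ) δ := by constructor <;> simp [hδ]
  have huv0 : u 0 = v 0 := by
    have := hbd 0 h0
    simp at this
    linarith [le_abs_self (u 0 - v 0), neg_abs_le (u 0 - v 0)]
  refine ⟨⟨fun h => critical_aux hδ hC u v hv hbd h,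
    fun h => critical_aux hδ hC v u hu ?_ h⟩, huv0⟩
  intro s hs
  rw [abs_sub_comm]
  exact hbd s hs
end

section
/- Let X be a nonempty compact Hausdorff topological space, let h : [0,1] × X → ℝ be continuous, and let F : ℝ × [0,1] × X → ℝ be continuous with F(0,t,x) = 0 for all (t,x), such that the first and second partial derivatives ∂F/∂s and ∂²F/∂s² exist and are continuous on ℝ × [0,1] × X. Define l(s) := ‖h − F(s,·,·)‖ and u(s) := ‖h − s·(∂F/∂s)(0,·,·)‖, where ‖·‖ denotes the Hofer norm. Then u is a convex function of s, and there exist positive numbers δ and C such that |l(s) − u(s)| ≤ C·s² for all s ∈ (−δ, δ). -/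
open Set

section Helpers
set_option linter.unusedSectionVars false
variable {X : Type*} [TopologicalSpace X] [CompactSpace X] [Nonempty X]

private lemma bddA' (f : X → ℝ) (hf : Continuous f) : BddAbove (range f) :=
  (isCompact_range hf).bddAbove

private lemma bddB' (f : X → ℝ) (hf : Continuous f) : BddBelow (range f) :=
  (isCompact_range hf).bddBelow

private lemma abs_ciSup_sub' {f g : X → ℝ} (hf : BddAbove (range f)) (hg : BddAbove (range g))
    {ε : ℝ} (hfg : ∀ x, |f x - g x| ≤ ε) : |(⨆ x, f x) - ⨆ x, g x| ≤ ε := by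
  rw [abs_sub_le_iff]
  constructor
  · have : (⨆ x, f x) ≤ (⨆ x, g x) + ε := by
      refine ciSup_le fun x => ?_
      have := abs_le.1 (hfg x)
      have := le_ciSup hg x
      linarith
    linarith
  · have : (⨆ x, g x) ≤ (⨆ x, f x) + ε := by
      refine ciSup_le fun x => ?_
      have := abs_le.1 (hfg x)
      have := le_ciSup hf x
      linarith
    linarith

private lemma abs_ciInf_sub' {f g : X → ℝ} (hf : BddBelow (range f)) (hg : BddBelow (range g))
    {ε : ℝ} (hfg : ∀ x, |f x - g x| ≤ ε) : |(⨅ x, f x) - ⨅ x, g x| ≤ ε := by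
  rw [abs_sub_le_iff]
  constructor
  · have : (⨅ x, f x) - ε ≤ ⨅ x, g x := by
      refine le_ciInf fun x => ?_
      have := abs_le.1 (hfg x)
      have := ciInf_le hf x
      linarith
    linarith
  · have : (⨅ x, g x) - ε ≤ ⨅ x, f x := by
      refine le_ciInf fun x => ?_
      have := abs_le.1 (hfg x)
      have := ciInf_le hg x
      linarith
    linarith

private lemma lipschitz_ciSup' : LipschitzWith 1 (fun f : C(X, ℝ) => ⨆ x, f x) := by
  refine LipschitzWith.of_dist_le_mul fun f g => ?_
  rw [NNReal.coe_one, one_mul, Real.dist_eq]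
  refine abs_ciSup_sub' (bddA' _ f.continuous) (bddA' _ g.continuous) fun x => ?_
  rw [← Real.dist_eq]
  exact ContinuousMap.dist_apply_le_dist x

private lemma lipschitz_ciInf' : LipschitzWith 1 (fun f : C(X, ℝ) => ⨅ x, f x) := by
  refine LipschitzWith.of_dist_le_mul fun f g => ?_
  rw [NNReal.coe_one, one_mul, Real.dist_eq]
  refine abs_ciInf_sub' (bddB' _ f.continuous) (bddB' _ g.continuous) fun x => ?_
  rw [← Real.dist_eq]
  exact ContinuousMap.dist_apply_le_dist x

private lemma continuousOn_param_iSup' {g : ℝ → X → ℝ}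
    (hg : ContinuousOn (fun p : ℝ × X => g p.1 p.2) (Icc 0 1 ×ˢ univ)) :
    ContinuousOn (fun t => ⨆ x, g t x) (Icc (0:ℝ) 1) := by
  rw [continuousOn_iff_continuous_restrict]
  have hG : Continuous (fun p : ↥(Icc (0:ℝ) 1) × X => g p.1.1 p.2) :=
    hg.comp_continuous ((continuous_subtype_val.comp continuous_fst).prodMk continuous_snd)
      fun p => ⟨p.1.2, mem_univ _⟩
  let G : C(↥(Icc (0:ℝ) 1) × X, ℝ) := ⟨_, hG⟩
  have : (Icc (0:ℝ) 1).domRestrict (fun t => ⨆ x, g t x)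
      = (fun f : C(X, ℝ) => ⨆ x, f x) ∘ G.curry := rfl
  rw [this]
  exact lipschitz_ciSup'.continuous.comp G.curry.continuous

private lemma continuousOn_param_iInf' {g : ℝ → X → ℝ}
    (hg : ContinuousOn (fun p : ℝ × X => g p.1 p.2) (Icc 0 1 ×ˢ univ)) :
    ContinuousOn (fun t => ⨅ x, g t x) (Icc (0:ℝ) 1) := by
  rw [continuousOn_iff_continuous_restrict]
  have hG : Continuous (fun p : ↥(Icc (0:ℝ) 1) × X => g p.1.1 p.2) :=
    hg.comp_continuous ((continuous_subtype_val.comp continuous_fst).prodMk continuous_snd)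
      fun p => ⟨p.1.2, mem_univ _⟩
  let G : C(↥(Icc (0:ℝ) 1) × X, ℝ) := ⟨_, hG⟩
  have : (Icc (0:ℝ) 1).domRestrict (fun t => ⨅ x, g t x)
      = (fun f : C(X, ℝ) => ⨅ x, f x) ∘ G.curry := rfl
  rw [this]
  exact lipschitz_ciInf'.continuous.comp G.curry.continuous

end Helpers

/-- The Hofer (oscillation) norm of a function `u : [0,1] × X → ℝ`:
`‖u‖ = ∫₀¹ (max_{x∈X} u(t,x) − min_{x∈X} u(t,x)) dt`. -/
noncomputable def hoferNorm {X : Type*} [TopologicalSpace X] (u : ℝ → X → ℝ) : ℝ :=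
  ∫ t in (0:ℝ)..1, ((⨆ x, u t x) - (⨅ x, u t x))

/-- Let X be a nonempty compact Hausdorff space, `h : [0,1] × X → ℝ`
continuous, and `F : ℝ × [0,1] × X → ℝ` continuous with `F(0,t,x) = 0`, whose first
and second partial derivatives `F₁ = ∂F/∂s` and `F₂ = ∂²F/∂s²` exist and are
continuous. Set `l(s) = ‖h − F(s,·,·)‖` and `u(s) = ‖h − s·F₁(0,·,·)‖` (Hofer norm).
Then `u` is convex and there are `δ, C > 0` with `|l(s) − u(s)| ≤ C s²` on `(−δ,δ)`. -/
theorem length_function_convex_approximation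
    {X : Type*} [TopologicalSpace X] [CompactSpace X] [T2Space X] [Nonempty X]
    (h : ℝ → X → ℝ)
    (hcont : ContinuousOn (fun p : ℝ × X => h p.1 p.2) (Icc 0 1 ×ˢ univ))
    (F F₁ F₂ : ℝ → ℝ → X → ℝ)
    (hF0 : ∀ t ∈ Icc (0:ℝ) 1, ∀ x : X, F 0 t x = 0)
    (hFcont : ContinuousOn (fun p : ℝ × ℝ × X => F p.1 p.2.1 p.2.2)
      (univ ×ˢ Icc 0 1 ×ˢ univ))
    (hF₁ : ∀ s : ℝ, ∀ t ∈ Icc (0:ℝ) 1, ∀ x : X,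
      HasDerivAt (fun s' => F s' t x) (F₁ s t x) s)
    (hF₂ : ∀ s : ℝ, ∀ t ∈ Icc (0:ℝ) 1, ∀ x : X,
      HasDerivAt (fun s' => F₁ s' t x) (F₂ s t x) s)
    (hF₁cont : ContinuousOn (fun p : ℝ × ℝ × X => F₁ p.1 p.2.1 p.2.2)
      (univ ×ˢ Icc 0 1 ×ˢ univ))
    (hF₂cont : ContinuousOn (fun p : ℝ × ℝ × X => F₂ p.1 p.2.1 p.2.2)
      (univ ×ˢ Icc 0 1 ×ˢ univ))
    (l u : ℝ → ℝ)
    (hl : ∀ s : ℝ, l s = hoferNorm (fun t x => h t x - F s t x))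
    (hu : ∀ s : ℝ, u s = hoferNorm (fun t x => h t x - s * F₁ 0 t x)) :
    ConvexOn ℝ univ u ∧
      ∃ δ > (0:ℝ), ∃ C > (0:ℝ), ∀ s ∈ Ioo (-δ) δ, |l s - u s| ≤ C * s ^ 2 := by
  classical
  -- slice continuity facts
  have cH : ∀ t ∈ Icc (0:ℝ) 1, Continuous (fun x => h t x) := fun t ht =>
    hcont.comp_continuous (continuous_const.prodMk continuous_id) fun x => ⟨ht, mem_univ _⟩
  have cF : ∀ (s : ℝ), ∀ t ∈ Icc (0:ℝ) 1, Continuous (fun x => F s t x) := fun s t ht =>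
    hFcont.comp_continuous
      (continuous_const.prodMk (continuous_const.prodMk continuous_id))
      fun x => ⟨mem_univ _, ht, mem_univ _⟩
  have cF1 : ∀ t ∈ Icc (0:ℝ) 1, Continuous (fun x => F₁ 0 t x) := fun t ht =>
    hF₁cont.comp_continuous
      (continuous_const.prodMk (continuous_const.prodMk continuous_id))
      fun x => ⟨mem_univ _, ht, mem_univ _⟩
  -- pair continuity of the two integrand families
  have contPairF : ∀ s : ℝ, ContinuousOn (fun p : ℝ × X => h p.1 p.2 - F s p.1 p.2)
      (Icc 0 1 ×ˢ univ) := by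
    intro s
    refine hcont.sub ?_
    exact hFcont.comp ((continuous_const.prodMk continuous_id).continuousOn)
      fun p hp => ⟨mem_univ _, hp.1, mem_univ _⟩
  have contPairU : ∀ s : ℝ, ContinuousOn (fun p : ℝ × X => h p.1 p.2 - s * F₁ 0 p.1 p.2)
      (Icc 0 1 ×ˢ univ) := by
    intro s
    refine hcont.sub (continuousOn_const.mul ?_)
    exact hF₁cont.comp ((continuous_const.prodMk continuous_id).continuousOn)
      fun p hp => ⟨mem_univ _, hp.1, mem_univ _⟩
  -- integrand functions
  set fl : ℝ → ℝ → ℝ := fun s t => (⨆ x, (h t x - F s t x)) - ⨅ x, (h t x - F s t x) with hfl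
  set fu : ℝ → ℝ → ℝ :=
    fun s t => (⨆ x, (h t x - s * F₁ 0 t x)) - ⨅ x, (h t x - s * F₁ 0 t x) with hfu
  have Il : ∀ s : ℝ, IntervalIntegrable (fl s) MeasureTheory.volume 0 1 := by
    intro s
    apply ContinuousOn.intervalIntegrable
    rw [uIcc_of_le (zero_le_one (α := ℝ))]
    exact (continuousOn_param_iSup' (contPairF s)).sub (continuousOn_param_iInf' (contPairF s))
  have Iu : ∀ s : ℝ, IntervalIntegrable (fu s) MeasureTheory.volume 0 1 := by
    intro s
    apply ContinuousOn.intervalIntegrable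
    rw [uIcc_of_le (zero_le_one (α := ℝ))]
    exact (continuousOn_param_iSup' (contPairU s)).sub (continuousOn_param_iInf' (contPairU s))
  have hlint : ∀ s : ℝ, l s = ∫ t in (0:ℝ)..1, fl s t := fun s => hl s
  have huint : ∀ s : ℝ, u s = ∫ t in (0:ℝ)..1, fu s t := fun s => hu s
  constructor
  · -- convexity of u
    refine ⟨convex_univ, fun s₁ _ s₂ _ a b ha hb hab => ?_⟩
    simp only [smul_eq_mul]
    have hpt : ∀ t ∈ Icc (0:ℝ) 1, fu (a * s₁ + b * s₂) t ≤ a * fu s₁ t + b * fu s₂ t := by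
      intro t ht
      have bA1 : BddAbove (range fun x => h t x - s₁ * F₁ 0 t x) :=
        bddA' _ ((cH t ht).sub (continuous_const.mul (cF1 t ht)))
      have bA2 : BddAbove (range fun x => h t x - s₂ * F₁ 0 t x) :=
        bddA' _ ((cH t ht).sub (continuous_const.mul (cF1 t ht)))
      have bB1 : BddBelow (range fun x => h t x - s₁ * F₁ 0 t x) :=
        bddB' _ ((cH t ht).sub (continuous_const.mul (cF1 t ht)))
      have bB2 : BddBelow (range fun x => h t x - s₂ * F₁ 0 t x) :=
        bddB' _ ((cH t ht).sub (continuous_const.mul (cF1 t ht)))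
      have key : ∀ x : X, h t x - (a * s₁ + b * s₂) * F₁ 0 t x
          = a * (h t x - s₁ * F₁ 0 t x) + b * (h t x - s₂ * F₁ 0 t x) := by
        intro x
        linear_combination (-(h t x)) * hab
      have hS : (⨆ x, (h t x - (a * s₁ + b * s₂) * F₁ 0 t x))
          ≤ a * (⨆ x, (h t x - s₁ * F₁ 0 t x)) + b * (⨆ x, (h t x - s₂ * F₁ 0 t x)) := by
        refine ciSup_le fun x => ?_
        rw [key x]
        exact add_le_add (mul_le_mul_of_nonneg_left (le_ciSup bA1 x) ha)
          (mul_le_mul_of_nonneg_left (le_ciSup bA2 x) hb)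
      have hI : a * (⨅ x, (h t x - s₁ * F₁ 0 t x)) + b * (⨅ x, (h t x - s₂ * F₁ 0 t x))
          ≤ ⨅ x, (h t x - (a * s₁ + b * s₂) * F₁ 0 t x) := by
        refine le_ciInf fun x => ?_
        rw [key x]
        exact add_le_add (mul_le_mul_of_nonneg_left (ciInf_le bB1 x) ha)
          (mul_le_mul_of_nonneg_left (ciInf_le bB2 x) hb)
      simp only [hfu]
      linarith
    have hInt₂ : IntervalIntegrable (fun t => a * fu s₁ t + b * fu s₂ t)
        MeasureTheory.volume 0 1 := ((Iu s₁).const_mul a).add ((Iu s₂).const_mul b)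
    calc u (a * s₁ + b * s₂) = ∫ t in (0:ℝ)..1, fu (a * s₁ + b * s₂) t := huint _
      _ ≤ ∫ t in (0:ℝ)..1, (a * fu s₁ t + b * fu s₂ t) := by
          refine intervalIntegral.integral_mono_on zero_le_one (Iu _) hInt₂ hpt
      _ = a * u s₁ + b * u s₂ := by
          rw [intervalIntegral.integral_add ((Iu s₁).const_mul a) ((Iu s₂).const_mul b),
            intervalIntegral.integral_const_mul, intervalIntegral.integral_const_mul,
            huint s₁, huint s₂]
  · -- quadratic approximation
    have hK : IsCompact ((Icc (-1:ℝ) 1) ×ˢ (Icc (0:ℝ) 1) ×ˢ (univ : Set X)) :=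
      isCompact_Icc.prod (isCompact_Icc.prod isCompact_univ)
    obtain ⟨M, hM⟩ := hK.exists_bound_of_continuousOn
      (hF₂cont.mono fun p hp => ⟨mem_univ _, hp.2⟩)
    have hM0 : 0 ≤ M := by
      have := hM ((0:ℝ), (0:ℝ), Classical.arbitrary X)
        ⟨by norm_num, by norm_num, mem_univ _⟩
      exact le_trans (norm_nonneg _) this
    -- Taylor estimate
    have key : ∀ s ∈ Icc (-1:ℝ) 1, ∀ t ∈ Icc (0:ℝ) 1, ∀ x : X,
        |F s t x - s * F₁ 0 t x| ≤ M * s ^ 2 := by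
      intro s hs t ht x
      have hconv : Convex ℝ (uIcc (0:ℝ) s) := convex_uIcc 0 s
      have hsub : uIcc (0:ℝ) s ⊆ Icc (-1:ℝ) 1 := by
        intro σ hσ
        rcases mem_uIcc.1 hσ with ⟨h1, h2⟩ | ⟨h1, h2⟩ <;>
          exact ⟨by linarith [hs.1, hs.2], by linarith [hs.1, hs.2]⟩
      have habs : ∀ σ ∈ uIcc (0:ℝ) s, |σ| ≤ |s| := by
        intro σ hσ
        rcases mem_uIcc.1 hσ with ⟨h1, h2⟩ | ⟨h1, h2⟩ <;> rw [abs_le] <;>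
          constructor <;> linarith [le_abs_self s, neg_abs_le s, abs_nonneg s]
      have hd1 : ∀ σ ∈ uIcc (0:ℝ) s, |F₁ σ t x - F₁ 0 t x| ≤ M * |s| := by
        intro σ hσ
        have step := hconv.norm_image_sub_le_of_norm_hasDerivWithin_le
          (f := fun σ' => F₁ σ' t x) (f' := fun σ' => F₂ σ' t x)
          (fun σ' _ => (hF₂ σ' t ht x).hasDerivWithinAt)
          (fun σ' hσ' => hM (σ', t, x) ⟨hsub hσ', ht, mem_univ _⟩)
          left_mem_uIcc hσ
        rw [Real.norm_eq_abs, Real.norm_eq_abs, sub_zero] at step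
        exact le_trans step (mul_le_mul_of_nonneg_left (habs σ hσ) hM0)
      have step2 := hconv.norm_image_sub_le_of_norm_hasDerivWithin_le
        (f := fun σ' => F σ' t x - σ' * F₁ 0 t x)
        (f' := fun σ' => F₁ σ' t x - F₁ 0 t x)
        (fun σ' _ => ((hF₁ σ' t ht x).sub (hasDerivAt_mul_const _)).hasDerivWithinAt)
        (fun σ' hσ' => by rw [Real.norm_eq_abs]; exact hd1 σ' hσ')
        left_mem_uIcc right_mem_uIcc
      rw [hF0 t ht x, zero_mul, sub_zero, sub_zero, Real.norm_eq_abs, Real.norm_eq_abs,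
        sub_zero] at step2
      calc |F s t x - s * F₁ 0 t x| ≤ M * |s| * |s| := step2
        _ = M * s ^ 2 := by rw [mul_assoc, abs_mul_abs_self, sq]
    refine ⟨1, one_pos, 2 * M + 1, by linarith, fun s hs => ?_⟩
    have hs' : s ∈ Icc (-1:ℝ) 1 := ⟨hs.1.le, hs.2.le⟩
    -- pointwise bound on integrands
    have hpt : ∀ t ∈ Icc (0:ℝ) 1, |fl s t - fu s t| ≤ 2 * M * s ^ 2 := by
      intro t ht
      have hptx : ∀ x : X, |(h t x - F s t x) - (h t x - s * F₁ 0 t x)| ≤ M * s ^ 2 := by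
        intro x
        have e : (h t x - F s t x) - (h t x - s * F₁ 0 t x)
            = -(F s t x - s * F₁ 0 t x) := by ring
        rw [e, abs_neg]
        exact key s hs' t ht x
      have cf : Continuous (fun x => h t x - F s t x) := (cH t ht).sub (cF s t ht)
      have cg : Continuous (fun x => h t x - s * F₁ 0 t x) :=
        (cH t ht).sub (continuous_const.mul (cF1 t ht))
      have hA := abs_ciSup_sub' (bddA' _ cf) (bddA' _ cg) hptx
      have hB := abs_ciInf_sub' (bddB' _ cf) (bddB' _ cg) hptx
      simp only [hfl, hfu]
      rw [abs_le] at hA hB ⊢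
      constructor <;> linarith [hA.1, hA.2, hB.1, hB.2]
    rw [hlint s, huint s, ← intervalIntegral.integral_sub (Il s) (Iu s)]
    have hnorm := intervalIntegral.norm_integral_le_of_norm_le_const
      (C := 2 * M * s ^ 2) (f := fun t => fl s t - fu s t) (a := (0:ℝ)) (b := 1) ?_
    · rw [Real.norm_eq_abs] at hnorm
      have : |(1:ℝ) - 0| = 1 := by norm_num
      rw [this, mul_one] at hnorm
      nlinarith [sq_nonneg s]
    · intro t htm
      rw [uIoc_of_le (zero_le_one (α := ℝ))] at htm
      rw [Real.norm_eq_abs]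
      exact hpt t (Ioc_subset_Icc_self htm)
end

section
/- Let X be a nonempty compact Hausdorff topological space and h : [0,1] × X → ℝ continuous. Then ∫₀¹ max_{x∈X} h(t,x) dt ≥ max_{x∈X} ∫₀¹ h(t,x) dt, and equality holds if and only if there exists a point x₊ ∈ X such that h(t,x₊) = max_{x∈X} h(t,x) for all t ∈ [0,1], i.e., if and only if the intersection ⋂_{t∈[0,1]} maxset(h_t) is nonempty, where maxset(h_t) := { x ∈ X : h(t,x) = max_X h(t,·) }. -/
/-!
Pointwise `h t x ≤ M t := ⨆ y, h t y`; integrating in `t` and taking the supremum over `x` gives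
the inequality. Since `x ↦ ∫ h t x` is continuous on the compact space `X`, it attains its maximum
at some `x₀`, and in case of equality `M - h · x₀` is a continuous nonnegative function on `[0, 1]`
with zero integral, hence vanishes there (`M` is continuous by compactness of `X`). The continuity
results used need `h` continuous on all of `ℝ × X`, which is arranged by precomposing with the
projection of `ℝ` onto `[0, 1]`; this does not change integrals over `[0, 1]`.
-/

open Set MeasureTheory intervalIntegral

section

variable {X : Type*} [TopologicalSpace X] {F : ℝ → X → ℝ} {a b : ℝ}

theorem continuous_intervalIntegral_of_continuous_uncurry (hF : Continuous ↿F) (a b : ℝ) :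
    Continuous fun x => ∫ t in a..b, F t x :=
  continuous_parametric_intervalIntegral_of_continuous' (f := fun x t => F t x)
    (hF.comp continuous_swap) a b

theorem intervalIntegral_comp_projIcc {E : Type*} [NormedAddCommGroup E] [NormedSpace ℝ E]
    (hab : a ≤ b) (f : ℝ → E) : ∫ t in a..b, f (projIcc a b hab t) = ∫ t in a..b, f t :=
  integral_congr fun t ht => by rw [projIcc_of_mem hab (uIcc_of_le hab ▸ ht)]

theorem ContinuousOn.continuous_uncurry_comp_projIcc (hF : ContinuousOn ↿F (Icc a b ×ˢ univ))
    (hab : a ≤ b) : Continuous ↿fun t : ℝ => F (projIcc a b hab t) :=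
  hF.comp_continuous
    ((continuous_subtype_val.comp ((continuous_projIcc (h := hab)).comp continuous_fst)).prodMk
      continuous_snd) fun p => ⟨(projIcc a b hab p.1).2, mem_univ _⟩

variable [CompactSpace X]

theorem continuous_iSup_of_continuous_uncurry (hF : Continuous ↿F) :
    Continuous fun t => ⨆ x, F t x :=
  (isCompact_univ.continuous_sSup hF).congr fun t => by rw [image_univ]; rfl

theorem le_iSup_of_continuous_uncurry (hF : Continuous ↿F) (t : ℝ) (x : X) :
    F t x ≤ ⨆ y, F t y :=
  le_ciSup (isCompact_range (hF.uncurry_left t)).bddAbove x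

theorem iSup_intervalIntegral_le_intervalIntegral_iSup [Nonempty X] (hF : Continuous ↿F)
    (hab : a ≤ b) : (⨆ x, ∫ t in a..b, F t x) ≤ ∫ t in a..b, ⨆ x, F t x :=
  ciSup_le fun x => integral_mono_on hab ((hF.uncurry_right x).intervalIntegrable a b)
    ((continuous_iSup_of_continuous_uncurry hF).intervalIntegrable a b)
    fun t _ => le_iSup_of_continuous_uncurry hF t x

theorem exists_forall_eq_iSup_of_intervalIntegral_iSup_le [Nonempty X] (hF : Continuous ↿F)
    (hab : a < b) (h : (∫ t in a..b, ⨆ x, F t x) ≤ ⨆ x, ∫ t in a..b, F t x) :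
    ∃ x, ∀ t ∈ Icc a b, F t x = ⨆ y, F t y := by
  obtain ⟨x₀, -, hx₀⟩ := isCompact_univ.exists_isMaxOn univ_nonempty
    (continuous_intervalIntegral_of_continuous_uncurry hF a b).continuousOn
  refine ⟨x₀, fun t ht => (le_iSup_of_continuous_uncurry hF t x₀).antisymm ?_⟩
  by_contra! hlt
  have : (∫ t in a..b, F t x₀) < ∫ t in a..b, ⨆ x, F t x :=
    integral_lt_integral_of_continuousOn_of_le_of_exists_lt hab
      (hF.uncurry_right x₀).continuousOn (continuous_iSup_of_continuous_uncurry hF).continuousOn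
      (fun t _ => le_iSup_of_continuous_uncurry hF t x₀) ⟨t, ht, hlt⟩
  linarith [ciSup_le (isMaxOn_univ_iff.mp hx₀)]

theorem intervalIntegral_iSup_le_iSup_intervalIntegral_of_forall_eq_iSup (hF : Continuous ↿F)
    (hab : a ≤ b) {x : X} (hx : ∀ t ∈ Icc a b, F t x = ⨆ y, F t y) :
    (∫ t in a..b, ⨆ y, F t y) ≤ ⨆ y, ∫ t in a..b, F t y :=
  calc (∫ t in a..b, ⨆ y, F t y) = ∫ t in a..b, F t x :=
        integral_congr fun t ht => (hx t (uIcc_of_le hab ▸ ht)).symm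
    _ ≤ ⨆ y, ∫ t in a..b, F t y :=
        le_ciSup (isCompact_range
          (continuous_intervalIntegral_of_continuous_uncurry hF a b)).bddAbove x

theorem intervalIntegral_iSup_eq_iSup_intervalIntegral_iff [Nonempty X] (hF : Continuous ↿F)
    (hab : a < b) :
    (∫ t in a..b, ⨆ x, F t x) = (⨆ x, ∫ t in a..b, F t x) ↔
      ∃ x, ∀ t ∈ Icc a b, F t x = ⨆ y, F t y :=
  ⟨fun h => exists_forall_eq_iSup_of_intervalIntegral_iSup_le hF hab h.le, fun ⟨_, hx⟩ =>
    (intervalIntegral_iSup_le_iSup_intervalIntegral_of_forall_eq_iSup hF hab.le hx).antisymm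
      (iSup_intervalIntegral_le_intervalIntegral_iSup hF hab.le)⟩

theorem ContinuousOn.iSup_intervalIntegral_le_intervalIntegral_iSup [Nonempty X]
    (hF : ContinuousOn ↿F (Icc a b ×ˢ univ)) (hab : a ≤ b) :
    (⨆ x, ∫ t in a..b, F t x) ≤ ∫ t in a..b, ⨆ x, F t x := by
  have h := _root_.iSup_intervalIntegral_le_intervalIntegral_iSup
    (hF.continuous_uncurry_comp_projIcc hab) hab
  rwa [intervalIntegral_comp_projIcc hab (fun t => ⨆ x, F t x),
    iSup_congr fun x => intervalIntegral_comp_projIcc hab (F · x)] at h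

theorem ContinuousOn.intervalIntegral_iSup_eq_iSup_intervalIntegral_iff [Nonempty X]
    (hF : ContinuousOn ↿F (Icc a b ×ˢ univ)) (hab : a < b) :
    (∫ t in a..b, ⨆ x, F t x) = (⨆ x, ∫ t in a..b, F t x) ↔
      ∃ x, ∀ t ∈ Icc a b, F t x = ⨆ y, F t y := by
  have h := _root_.intervalIntegral_iSup_eq_iSup_intervalIntegral_iff
    (hF.continuous_uncurry_comp_projIcc hab.le) hab
  rw [intervalIntegral_comp_projIcc hab.le (fun t => ⨆ x, F t x),
    iSup_congr fun x => intervalIntegral_comp_projIcc hab.le (F · x)] at h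
  refine h.trans (exists_congr fun x => forall₂_congr fun t ht => ?_)
  rw [projIcc_of_mem hab.le ht]

end

theorem integral_max_ge_max_integral_general
    {X : Type*} [TopologicalSpace X] [CompactSpace X] [Nonempty X]
    (h : ℝ → X → ℝ)
    (hcont : ContinuousOn (fun p : ℝ × X => h p.1 p.2) (Icc 0 1 ×ˢ univ)) :
    (⨆ x, ∫ t in (0:ℝ)..1, h t x) ≤ (∫ t in (0:ℝ)..1, ⨆ x, h t x) ∧
    ((∫ t in (0:ℝ)..1, ⨆ x, h t x) = (⨆ x, ∫ t in (0:ℝ)..1, h t x) ↔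
      ∃ xp : X, ∀ t ∈ Icc (0:ℝ) 1, h t xp = ⨆ x, h t x) :=
  ⟨hcont.iSup_intervalIntegral_le_intervalIntegral_iSup zero_le_one,
    hcont.intervalIntegral_iSup_eq_iSup_intervalIntegral_iff zero_lt_one⟩

/-- For a nonempty compact Hausdorff space X and continuous
`h : [0,1] × X → ℝ`, one has `∫₀¹ max_x h(t,x) dt ≥ max_x ∫₀¹ h(t,x) dt`, with
equality if and only if there is a point `xp ∈ X` with `h(t,xp) = max_x h(t,x)`
for all `t ∈ [0,1]` (i.e. iff `⋂_{t∈[0,1]} maxset(h_t)` is nonempty). -/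
theorem integral_max_ge_max_integral
    {X : Type*} [TopologicalSpace X] [CompactSpace X] [T2Space X] [Nonempty X]
    (h : ℝ → X → ℝ)
    (hcont : ContinuousOn (fun p : ℝ × X => h p.1 p.2) (Icc 0 1 ×ˢ univ)) :
    (⨆ x, ∫ t in (0:ℝ)..1, h t x) ≤ (∫ t in (0:ℝ)..1, ⨆ x, h t x) ∧
    ((∫ t in (0:ℝ)..1, ⨆ x, h t x) = (⨆ x, ∫ t in (0:ℝ)..1, h t x) ↔
      ∃ xp : X, ∀ t ∈ Icc (0:ℝ) 1, h t xp = ⨆ x, h t x) :=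
  integral_max_ge_max_integral_general h hcont
end

section
/- Let X be a nonempty compact Hausdorff topological space and h : [0,1] × X → ℝ continuous. Then ‖h‖ ≥ max_{x∈X} ∫₀¹ h(t,x) dt − min_{x∈X} ∫₀¹ h(t,x) dt, and equality ‖h‖ = max_{x∈X} ∫₀¹ h(t,x) dt − min_{x∈X} ∫₀¹ h(t,x) dt holds if and only if there exist points x₊, x₋ ∈ X with h(t,x₊) = max_{x∈X} h(t,x) and h(t,x₋) = min_{x∈X} h(t,x) for all t ∈ [0,1]; that is, if and only if both ⋂_{t∈[0,1]} maxset(h_t) and ⋂_{t∈[0,1]} minset(h_t) are nonempty. -/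
open Set

/-!
Write `M t`, `m t` for the maximum and minimum of `h t` and `A x = ∫₀¹ h(t,x) dt`. Integrating
`m t ≤ h t x ≤ M t` gives `∫ m ≤ A ≤ ∫ M`, so `max A - min A ≤ ∫ M - ∫ m = ‖h‖`, with equality
iff `max A = ∫ M` and `min A = ∫ m`. Since `A` is continuous on the compact space `X`, these
extrema are attained, and `A x = ∫ M` means that the continuous nonnegative function `M - h(·, x)`
has zero integral, i.e. vanishes on `[0, 1]`.
-/

open Function

section CompactParameter

variable {α T X : Type*} [ConditionallyCompleteLinearOrder α] [TopologicalSpace α]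
  [TopologicalSpace T] [TopologicalSpace X] [CompactSpace X]

theorem ContinuousOn.ciSup_of_compactSpace [OrderTopology α] {f : T → X → α} {s : Set T}
    (hf : ContinuousOn (uncurry f) (s ×ˢ univ)) : ContinuousOn (fun t => ⨆ x, f t x) s := by
  rw [continuousOn_iff_continuous_domRestrict]
  have hrestrict : Continuous (uncurry fun t : s => f t) :=
    hf.comp_continuous (continuous_subtype_val.prodMap continuous_id) fun p => ⟨p.1.2, trivial⟩
  have hsup := isCompact_univ.continuous_sSup (f := fun t : s => f t) hrestrict
  simp only [image_univ] at hsup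
  exact hsup

theorem ContinuousOn.ciInf_of_compactSpace [OrderTopology α] {f : T → X → α} {s : Set T}
    (hf : ContinuousOn (uncurry f) (s ×ˢ univ)) : ContinuousOn (fun t => ⨅ x, f t x) s :=
  ContinuousOn.ciSup_of_compactSpace (α := αᵒᵈ) hf

theorem Continuous.ciSup_eq_iff_of_forall_le [ClosedIciTopology α] [Nonempty X] {A : X → α}
    (hA : Continuous A) {c : α} (hc : ∀ x, A x ≤ c) : ⨆ x, A x = c ↔ ∃ x, A x = c := by
  constructor
  · rintro rfl
    exact (isCompact_range hA).sSup_mem (range_nonempty A)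
  · rintro ⟨x, rfl⟩
    exact le_antisymm (ciSup_le hc) (le_ciSup (isCompact_range hA).bddAbove x)

theorem Continuous.ciInf_eq_iff_of_forall_ge [ClosedIicTopology α] [Nonempty X] {A : X → α}
    (hA : Continuous A) {c : α} (hc : ∀ x, c ≤ A x) : ⨅ x, A x = c ↔ ∃ x, A x = c :=
  Continuous.ciSup_eq_iff_of_forall_le (α := αᵒᵈ) hA hc

end CompactParameter

theorem intervalIntegral.integral_eq_integral_iff_eqOn_of_continuousOn_of_le {f g : ℝ → ℝ}
    {a b : ℝ} (hab : a < b) (hf : ContinuousOn f (Icc a b)) (hg : ContinuousOn g (Icc a b))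
    (hfg : ∀ t ∈ Icc a b, f t ≤ g t) :
    ∫ t in a..b, f t = ∫ t in a..b, g t ↔ EqOn f g (Icc a b) := by
  refine ⟨fun heq t ht => ?_, fun heq => integral_congr (by rwa [uIcc_of_le hab.le])⟩
  by_contra hne
  exact heq.not_lt (integral_lt_integral_of_continuousOn_of_le_of_exists_lt hab hf hg
    (fun s hs => hfg s (Ioc_subset_Icc_self hs)) ⟨t, ht, (hfg t ht).lt_of_ne hne⟩)

namespace ContinuousOn

variable {X : Type*} [TopologicalSpace X] {f : ℝ → X → ℝ} {a b : ℝ}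

theorem continuous_intervalIntegral (hf : ContinuousOn (uncurry f) (Icc a b ×ˢ univ))
    (hab : a ≤ b) :
    Continuous fun x => ∫ t in a..b, f t x := by
  have hclamp : Continuous (uncurry fun t => f (projIcc a b hab t)) :=
    hf.comp_continuous ((continuous_subtype_val.comp (continuous_projIcc (h := hab))).prodMap
      continuous_id) fun p => ⟨Subtype.mem _, trivial⟩
  refine (intervalIntegral.continuous_parametric_intervalIntegral_of_continuous'
    (μ := MeasureTheory.volume) (f := fun x t => f (projIcc a b hab t) x)
    (hclamp.comp continuous_swap) a b).congr fun x => ?_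
  refine intervalIntegral.integral_congr fun t ht => ?_
  rw [uIcc_of_le hab] at ht
  simp [projIcc_of_mem hab ht]

theorem continuous_apply_of_mem (hf : ContinuousOn (uncurry f) (Icc a b ×ˢ univ)) {t : ℝ}
    (ht : t ∈ Icc a b) : Continuous (f t) :=
  hf.comp_continuous (Continuous.prodMk_right t) fun _ => ⟨ht, trivial⟩

theorem continuousOn_apply_left (hf : ContinuousOn (uncurry f) (Icc a b ×ˢ univ)) (x : X) :
    ContinuousOn (fun t => f t x) (Icc a b) :=
  hf.comp (Continuous.prodMk_left x).continuousOn fun _ ht => ⟨ht, trivial⟩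

variable [CompactSpace X]

theorem apply_le_ciSup (hf : ContinuousOn (uncurry f) (Icc a b ×ˢ univ)) {t : ℝ}
    (ht : t ∈ Icc a b) (x : X) : f t x ≤ ⨆ y, f t y :=
  le_ciSup (isCompact_range (hf.continuous_apply_of_mem ht)).bddAbove x

theorem ciInf_le_apply (hf : ContinuousOn (uncurry f) (Icc a b ×ˢ univ)) {t : ℝ}
    (ht : t ∈ Icc a b) (x : X) : ⨅ y, f t y ≤ f t x :=
  ciInf_le (isCompact_range (hf.continuous_apply_of_mem ht)).bddBelow x

theorem integral_le_integral_ciSup (hf : ContinuousOn (uncurry f) (Icc a b ×ˢ univ))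
    (hab : a ≤ b) (x : X) : ∫ t in a..b, f t x ≤ ∫ t in a..b, ⨆ y, f t y :=
  intervalIntegral.integral_mono_on hab
    ((hf.continuousOn_apply_left x).intervalIntegrable_of_Icc hab)
    (hf.ciSup_of_compactSpace.intervalIntegrable_of_Icc hab)
    fun _ ht => hf.apply_le_ciSup ht x

theorem integral_ciInf_le_integral (hf : ContinuousOn (uncurry f) (Icc a b ×ˢ univ))
    (hab : a ≤ b) (x : X) : ∫ t in a..b, ⨅ y, f t y ≤ ∫ t in a..b, f t x :=
  intervalIntegral.integral_mono_on hab (hf.ciInf_of_compactSpace.intervalIntegrable_of_Icc hab)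
    ((hf.continuousOn_apply_left x).intervalIntegrable_of_Icc hab)
    fun _ ht => hf.ciInf_le_apply ht x

theorem integral_eq_integral_ciSup_iff (hf : ContinuousOn (uncurry f) (Icc a b ×ˢ univ))
    (hab : a < b) (x : X) :
    ∫ t in a..b, f t x = ∫ t in a..b, ⨆ y, f t y ↔ ∀ t ∈ Icc a b, f t x = ⨆ y, f t y :=
  intervalIntegral.integral_eq_integral_iff_eqOn_of_continuousOn_of_le hab
    (hf.continuousOn_apply_left x) hf.ciSup_of_compactSpace
    fun _ ht => hf.apply_le_ciSup ht x

theorem integral_eq_integral_ciInf_iff (hf : ContinuousOn (uncurry f) (Icc a b ×ˢ univ))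
    (hab : a < b) (x : X) :
    ∫ t in a..b, f t x = ∫ t in a..b, ⨅ y, f t y ↔ ∀ t ∈ Icc a b, f t x = ⨅ y, f t y := by
  rw [eq_comm, intervalIntegral.integral_eq_integral_iff_eqOn_of_continuousOn_of_le hab
    hf.ciInf_of_compactSpace (hf.continuousOn_apply_left x)
    fun _ ht => hf.ciInf_le_apply ht x]
  exact forall₂_congr fun _ _ => eq_comm

theorem hoferNorm_eq (hf : ContinuousOn (uncurry f) (Icc 0 1 ×ˢ univ)) :
    hoferNorm f = (∫ t in (0:ℝ)..1, ⨆ x, f t x) - ∫ t in (0:ℝ)..1, ⨅ x, f t x :=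
  intervalIntegral.integral_sub (hf.ciSup_of_compactSpace.intervalIntegrable_of_Icc zero_le_one)
    (hf.ciInf_of_compactSpace.intervalIntegrable_of_Icc zero_le_one)

end ContinuousOn

theorem hoferNorm_ge_oscillation_of_time_average_general
    {X : Type*} [TopologicalSpace X] [CompactSpace X] [Nonempty X]
    (h : ℝ → X → ℝ)
    (hcont : ContinuousOn (fun p : ℝ × X => h p.1 p.2) (Icc 0 1 ×ˢ univ)) :
    (⨆ x, ∫ t in (0:ℝ)..1, h t x) - (⨅ x, ∫ t in (0:ℝ)..1, h t x) ≤ hoferNorm h ∧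
    (hoferNorm h = (⨆ x, ∫ t in (0:ℝ)..1, h t x) - (⨅ x, ∫ t in (0:ℝ)..1, h t x) ↔
      ∃ xp xm : X, ∀ t ∈ Icc (0:ℝ) 1,
        h t xp = (⨆ x, h t x) ∧ h t xm = (⨅ x, h t x)) := by
  replace hcont : ContinuousOn (uncurry h) (Icc 0 1 ×ˢ univ) := hcont
  have hA := hcont.continuous_intervalIntegral zero_le_one
  have hle := hcont.integral_le_integral_ciSup zero_le_one
  have hge := hcont.integral_ciInf_le_integral zero_le_one
  have hsup := ciSup_le hle
  have hinf := le_ciInf hge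
  rw [hcont.hoferNorm_eq]
  refine ⟨by linarith, ?_⟩
  calc _ ↔ (⨆ x, ∫ t in (0:ℝ)..1, h t x) = ∫ t in (0:ℝ)..1, ⨆ x, h t x ∧
        (⨅ x, ∫ t in (0:ℝ)..1, h t x) = ∫ t in (0:ℝ)..1, ⨅ x, h t x :=
        ⟨fun heq => ⟨by linarith, by linarith⟩, fun ⟨hM, hm⟩ => by rw [hM, hm]⟩
    _ ↔ (∃ xp, ∀ t ∈ Icc (0:ℝ) 1, h t xp = ⨆ x, h t x) ∧
        ∃ xm, ∀ t ∈ Icc (0:ℝ) 1, h t xm = ⨅ x, h t x := by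
      simp only [hA.ciSup_eq_iff_of_forall_le hle, hA.ciInf_eq_iff_of_forall_ge hge,
        hcont.integral_eq_integral_ciSup_iff zero_lt_one,
        hcont.integral_eq_integral_ciInf_iff zero_lt_one]
    _ ↔ _ := by simp only [exists_and_exists_comm, forall₂_and]

/-- For a nonempty compact Hausdorff space X and continuous
`h : [0,1] × X → ℝ`, one has `‖h‖ ≥ max_x ∫₀¹ h(t,x) dt − min_x ∫₀¹ h(t,x) dt`,
with equality if and only if there are points `xp, xm ∈ X` with
`h(t,xp) = max_x h(t,x)` and `h(t,xm) = min_x h(t,x)` for all `t ∈ [0,1]`,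
i.e. iff `⋂_t maxset(h_t)` and `⋂_t minset(h_t)` are both nonempty. -/
theorem hoferNorm_ge_oscillation_of_time_average
    {X : Type*} [TopologicalSpace X] [CompactSpace X] [T2Space X] [Nonempty X]
    (h : ℝ → X → ℝ)
    (hcont : ContinuousOn (fun p : ℝ × X => h p.1 p.2) (Icc 0 1 ×ˢ univ)) :
    (⨆ x, ∫ t in (0:ℝ)..1, h t x) - (⨅ x, ∫ t in (0:ℝ)..1, h t x) ≤ hoferNorm h ∧
    (hoferNorm h = (⨆ x, ∫ t in (0:ℝ)..1, h t x) - (⨅ x, ∫ t in (0:ℝ)..1, h t x) ↔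
      ∃ xp xm : X, ∀ t ∈ Icc (0:ℝ) 1,
        h t xp = (⨆ x, h t x) ∧ h t xm = (⨅ x, h t x)) :=
  hoferNorm_ge_oscillation_of_time_average_general h hcont
end

section
/- Let X be a nonempty compact Hausdorff topological space and h : [0,1] × X → ℝ continuous. Suppose there exist points x₊, x₋ ∈ X such that h(t,x₊) = max_{x∈X} h(t,x) and h(t,x₋) = min_{x∈X} h(t,x) for every t ∈ [0,1]. Then for every continuous G : [0,1] × X → ℝ satisfying ∫₀¹ G(t,x₊) dt = 0 and ∫₀¹ G(t,x₋) dt = 0, one has ‖h − G‖ ≥ ‖h‖. In particular ‖h − s·G‖ ≥ ‖h‖ for every real number s. -/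
/-!
At each time `t`, the oscillation of `h - G` is at least
`(h - G)(t, x₊) - (h - G)(t, x₋) = (h(t, x₊) - h(t, x₋)) - (G(t, x₊) - G(t, x₋))`,
and `h(t, x₊) - h(t, x₋)` is exactly the oscillation of `h`. Integrating over `[0,1]`, the
`G`-terms drop out because their integrals vanish.
-/

open Set

section UncurriedContinuity

variable {γ X α : Type*} [TopologicalSpace γ] [TopologicalSpace X] [CompactSpace X]
  [ConditionallyCompleteLinearOrder α] [TopologicalSpace α] [OrderTopology α]
  {s : Set γ} {u : γ → X → α}

theorem ContinuousOn.continuousOn_iSup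
    (hu : ContinuousOn (fun p : γ × X => u p.1 p.2) (s ×ˢ univ)) :
    ContinuousOn (fun t => ⨆ x, u t x) s := by
  rw [continuousOn_iff_continuous_domRestrict]
  have hus : Continuous fun p : s × X => u p.1 p.2 :=
    hu.comp_continuous (continuous_subtype_val.prodMap continuous_id) fun p => ⟨p.1.2, trivial⟩
  show Continuous fun t : s => ⨆ x, u t x
  simpa only [iSup, image_univ] using isCompact_univ.continuous_sSup (f := fun (t : s) => u t) hus

theorem ContinuousOn.continuousOn_iInf
    (hu : ContinuousOn (fun p : γ × X => u p.1 p.2) (s ×ˢ univ)) :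
    ContinuousOn (fun t => ⨅ x, u t x) s :=
  ContinuousOn.continuousOn_iSup (α := αᵒᵈ) hu

end UncurriedContinuity

theorem Continuous.sub_le_iSup_sub_iInf {X : Type*} [TopologicalSpace X] [CompactSpace X]
    {f : X → ℝ} (hf : Continuous f) (a b : X) : f a - f b ≤ (⨆ x, f x) - (⨅ x, f x) :=
  sub_le_sub (le_ciSup (isCompact_range hf).bddAbove a) (ciInf_le (isCompact_range hf).bddBelow b)

theorem hoferNorm_eq_integral_of_eq_iSup_of_eq_iInf {X : Type*} [TopologicalSpace X]
    {h : ℝ → X → ℝ} {xp xm : X} (hmax : ∀ t ∈ Icc (0:ℝ) 1, h t xp = ⨆ x, h t x)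
    (hmin : ∀ t ∈ Icc (0:ℝ) 1, h t xm = ⨅ x, h t x) :
    hoferNorm h = ∫ t in (0:ℝ)..1, (h t xp - h t xm) :=
  intervalIntegral.integral_congr fun t ht => by
    rw [uIcc_of_le zero_le_one] at ht
    simp only [hmax t ht, hmin t ht]

theorem integral_sub_le_hoferNorm {X : Type*} [TopologicalSpace X] [CompactSpace X]
    {u : ℝ → X → ℝ} (hu : ContinuousOn (fun p : ℝ × X => u p.1 p.2) (Icc 0 1 ×ˢ univ))
    (a b : X) : ∫ t in (0:ℝ)..1, (u t a - u t b) ≤ hoferNorm u :=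
  intervalIntegral.integral_mono_on zero_le_one
    (((hu.uncurry_right a (mem_univ a)).sub
      (hu.uncurry_right b (mem_univ b))).intervalIntegrable_of_Icc zero_le_one)
    ((hu.continuousOn_iSup.sub hu.continuousOn_iInf).intervalIntegrable_of_Icc zero_le_one)
    fun t ht => (continuousOn_univ.mp (hu.uncurry_left t ht)).sub_le_iSup_sub_iInf a b

theorem hoferNorm_le_hoferNorm_sub {X : Type*} [TopologicalSpace X] [CompactSpace X]
    {h G : ℝ → X → ℝ}
    (hcont : ContinuousOn (fun p : ℝ × X => h p.1 p.2) (Icc 0 1 ×ˢ univ))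
    (Gcont : ContinuousOn (fun p : ℝ × X => G p.1 p.2) (Icc 0 1 ×ˢ univ)) {xp xm : X}
    (hmax : ∀ t ∈ Icc (0:ℝ) 1, h t xp = ⨆ x, h t x)
    (hmin : ∀ t ∈ Icc (0:ℝ) 1, h t xm = ⨅ x, h t x)
    (hGp : (∫ t in (0:ℝ)..1, G t xp) = 0) (hGm : (∫ t in (0:ℝ)..1, G t xm) = 0) :
    hoferNorm h ≤ hoferNorm (fun t x => h t x - G t x) := by
  have hint {u : ℝ → X → ℝ}
      (hu : ContinuousOn (fun p : ℝ × X => u p.1 p.2) (Icc 0 1 ×ˢ univ)) (x : X) :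
      IntervalIntegrable (fun t => u t x) MeasureTheory.volume 0 1 :=
    (hu.uncurry_right x (mem_univ x)).intervalIntegrable_of_Icc zero_le_one
  calc hoferNorm h = ∫ t in (0:ℝ)..1, (h t xp - h t xm) :=
        hoferNorm_eq_integral_of_eq_iSup_of_eq_iInf hmax hmin
    _ = ∫ t in (0:ℝ)..1, ((h t xp - h t xm) - (G t xp - G t xm)) := by
        rw [intervalIntegral.integral_sub ((hint hcont xp).sub (hint hcont xm))
            ((hint Gcont xp).sub (hint Gcont xm)),
          intervalIntegral.integral_sub (hint Gcont xp) (hint Gcont xm), hGp, hGm, sub_zero,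
          sub_zero]
    _ = ∫ t in (0:ℝ)..1, ((h t xp - G t xp) - (h t xm - G t xm)) := by
        congr 1 with t
        ring
    _ ≤ hoferNorm (fun t x => h t x - G t x) :=
        integral_sub_le_hoferNorm (u := fun t x => h t x - G t x) (hcont.sub Gcont) xp xm

theorem quasi_autonomous_implies_length_critical_general
    {X : Type*} [TopologicalSpace X] [CompactSpace X]
    (h G : ℝ → X → ℝ)
    (hcont : ContinuousOn (fun p : ℝ × X => h p.1 p.2) (Icc 0 1 ×ˢ univ))
    (Gcont : ContinuousOn (fun p : ℝ × X => G p.1 p.2) (Icc 0 1 ×ˢ univ))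
    (xp xm : X)
    (hmax : ∀ t ∈ Icc (0:ℝ) 1, h t xp = ⨆ x, h t x)
    (hmin : ∀ t ∈ Icc (0:ℝ) 1, h t xm = ⨅ x, h t x)
    (hGp : (∫ t in (0:ℝ)..1, G t xp) = 0)
    (hGm : (∫ t in (0:ℝ)..1, G t xm) = 0) :
    hoferNorm h ≤ hoferNorm (fun t x => h t x - G t x) ∧
    ∀ s : ℝ, hoferNorm h ≤ hoferNorm (fun t x => h t x - s * G t x) :=
  ⟨hoferNorm_le_hoferNorm_sub hcont Gcont hmax hmin hGp hGm, fun s =>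
    hoferNorm_le_hoferNorm_sub hcont (continuousOn_const.mul Gcont) hmax hmin
      (by rw [intervalIntegral.integral_const_mul, hGp, mul_zero])
      (by rw [intervalIntegral.integral_const_mul, hGm, mul_zero])⟩

/-- Let X be a nonempty compact Hausdorff space and `h : [0,1] × X → ℝ`
continuous, admitting points `xp, xm ∈ X` with `h(t,xp) = max_x h(t,x)` and
`h(t,xm) = min_x h(t,x)` for every `t ∈ [0,1]`. Then for every continuous
`G : [0,1] × X → ℝ` with `∫₀¹ G(t,xp) dt = 0` and `∫₀¹ G(t,xm) dt = 0`, one has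
`‖h − G‖ ≥ ‖h‖`; in particular `‖h − s·G‖ ≥ ‖h‖` for every real `s`. -/
theorem quasi_autonomous_implies_length_critical
    {X : Type*} [TopologicalSpace X] [CompactSpace X] [T2Space X] [Nonempty X]
    (h G : ℝ → X → ℝ)
    (hcont : ContinuousOn (fun p : ℝ × X => h p.1 p.2) (Icc 0 1 ×ˢ univ))
    (Gcont : ContinuousOn (fun p : ℝ × X => G p.1 p.2) (Icc 0 1 ×ˢ univ))
    (xp xm : X)
    (hmax : ∀ t ∈ Icc (0:ℝ) 1, h t xp = ⨆ x, h t x)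
    (hmin : ∀ t ∈ Icc (0:ℝ) 1, h t xm = ⨅ x, h t x)
    (hGp : (∫ t in (0:ℝ)..1, G t xp) = 0)
    (hGm : (∫ t in (0:ℝ)..1, G t xm) = 0) :
    hoferNorm h ≤ hoferNorm (fun t x => h t x - G t x) ∧
    ∀ s : ℝ, hoferNorm h ≤ hoferNorm (fun t x => h t x - s * G t x) :=
  quasi_autonomous_implies_length_critical_general h G hcont Gcont xp xm hmax hmin hGp hGm
end

section
/- Let X be a nonempty compact Hausdorff topological space and h : [0,1] × X → ℝ continuous. Define G₀ : [0,1] × X → ℝ by G₀(t,x) := h(t,x) − ∫₀¹ h(τ,x) dτ, so that ∫₀¹ G₀(t,x) dt = 0 for every x ∈ X. If ‖h − G₀‖ ≥ ‖h‖, then ‖h‖ = max_{x∈X} ∫₀¹ h(t,x) dt − min_{x∈X} ∫₀¹ h(t,x) dt, and consequently there exist points x₊, x₋ ∈ X with h(t,x₊) = max_{x∈X} h(t,x) and h(t,x₋) = min_{x∈X} h(t,x) for all t ∈ [0,1]. -/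
open Set

lemma aux_int_zero {f : ℝ → ℝ} (hf : Continuous f) (h0 : ∀ t, 0 ≤ f t)
    (hz : (∫ t in (0:ℝ)..1, f t) = 0) : ∀ t ∈ Icc (0:ℝ) 1, f t = 0 := by
  intro t0 ht0
  by_contra hne
  have hpos : 0 < f t0 := lt_of_le_of_ne (h0 t0) (Ne.symm hne)
  obtain ⟨δ, hδ, hball⟩ := Metric.continuousAt_iff.mp hf.continuousAt (f t0 / 2) (by linarith)
  set c := max 0 (t0 - δ) with hc
  set d := min 1 (t0 + δ) with hd
  have hct : c ≤ t0 := max_le ht0.1 (by linarith)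
  have htd : t0 ≤ d := le_min ht0.2 (by linarith)
  have hcd : c < d := by
    rcases lt_or_eq_of_le ht0.2 with h1 | h1
    · exact lt_of_le_of_lt hct (lt_min h1 (by linarith))
    · exact lt_of_lt_of_le (max_lt (by linarith) (by linarith)) htd
  have hmid : ∀ u ∈ Ioo c d, 0 < f u := by
    intro u hu
    have h1 : |u - t0| < δ := abs_sub_lt_iff.2
      ⟨by have := hu.2.trans_le (min_le_right _ _); linarith,
       by have := (le_max_right 0 (t0 - δ)).trans_lt hu.1; linarith⟩
    have h2 := hball (show dist u t0 < δ by simpa [Real.dist_eq] using h1)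
    rw [Real.dist_eq] at h2
    have h3 := abs_sub_lt_iff.mp h2
    linarith [h3.2]
  have hsplit : (∫ t in (0:ℝ)..c, f t) + (∫ t in c..d, f t) + (∫ t in d..1, f t)
      = ∫ t in (0:ℝ)..1, f t := by
    rw [intervalIntegral.integral_add_adjacent_intervals (hf.intervalIntegrable _ _)
        (hf.intervalIntegrable _ _),
      intervalIntegral.integral_add_adjacent_intervals (hf.intervalIntegrable _ _)
        (hf.intervalIntegrable _ _)]
  have hpos2 : 0 < ∫ t in c..d, f t :=
    intervalIntegral.intervalIntegral_pos_of_pos_on (hf.intervalIntegrable _ _) hmid hcd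
  have hn1 : 0 ≤ ∫ t in (0:ℝ)..c, f t :=
    intervalIntegral.integral_nonneg (le_max_left _ _) fun u _ => h0 u
  have hn2 : 0 ≤ ∫ t in d..1, f t :=
    intervalIntegral.integral_nonneg (min_le_left _ _) fun u _ => h0 u
  rw [hz] at hsplit
  linarith

/-- Let X be a nonempty compact Hausdorff space, `h : [0,1] × X → ℝ`
continuous, and `G₀(t,x) := h(t,x) − ∫₀¹ h(τ,x) dτ` (so `∫₀¹ G₀(t,x) dt = 0` for
every `x`). If `‖h − G₀‖ ≥ ‖h‖`, then
`‖h‖ = max_x ∫₀¹ h(t,x) dt − min_x ∫₀¹ h(t,x) dt`, and consequently there are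
points `xp, xm ∈ X` with `h(t,xp) = max_x h(t,x)` and `h(t,xm) = min_x h(t,x)`
for all `t ∈ [0,1]`. -/
theorem length_critical_test_variation
    {X : Type*} [TopologicalSpace X] [CompactSpace X] [T2Space X] [Nonempty X]
    (h G₀ : ℝ → X → ℝ)
    (hcont : ContinuousOn (fun p : ℝ × X => h p.1 p.2) (Icc 0 1 ×ˢ univ))
    (hG₀ : ∀ t x, G₀ t x = h t x - ∫ τ in (0:ℝ)..1, h τ x)
    (hyp : hoferNorm h ≤ hoferNorm (fun t x => h t x - G₀ t x)) :
    (∀ x : X, (∫ t in (0:ℝ)..1, G₀ t x) = 0) ∧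
    hoferNorm h = (⨆ x, ∫ t in (0:ℝ)..1, h t x) - (⨅ x, ∫ t in (0:ℝ)..1, h t x) ∧
    ∃ xp xm : X, ∀ t ∈ Icc (0:ℝ) 1,
      h t xp = (⨆ x, h t x) ∧ h t xm = (⨅ x, h t x) := by
  classical
  have hπcont : Continuous fun t : ℝ => (projIcc (0:ℝ) 1 zero_le_one t : ℝ) :=
    continuous_subtype_val.comp continuous_projIcc
  set h' : ℝ → X → ℝ := fun t x => h (projIcc (0:ℝ) 1 zero_le_one t : ℝ) x with hh'
  have hcont' : Continuous fun p : ℝ × X => h' p.1 p.2 :=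
    hcont.comp_continuous ((hπcont.comp continuous_fst).prodMk continuous_snd)
      (fun p => ⟨(projIcc (0:ℝ) 1 zero_le_one p.1).2, mem_univ _⟩)
  have heq : ∀ t ∈ Icc (0:ℝ) 1, ∀ x, h' t x = h t x := by
    intro t ht x
    simp only [hh', projIcc_of_mem zero_le_one ht]
  have ct : ∀ t, Continuous fun x => h' t x := fun t =>
    hcont'.comp (continuous_const.prodMk continuous_id)
  have ctt : ∀ x, Continuous fun t => h' t x := fun x =>
    hcont'.comp (continuous_id.prodMk continuous_const)
  have bddA : ∀ t, BddAbove (range (h' t)) := fun t => (isCompact_range (ct t)).bddAbove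
  have bddB : ∀ t, BddBelow (range (h' t)) := fun t => (isCompact_range (ct t)).bddBelow
  set S : ℝ → ℝ := fun t => ⨆ x, h' t x with hSdef
  set I : ℝ → ℝ := fun t => ⨅ x, h' t x with hIdef
  have hS : Continuous S := by
    have := (isCompact_univ (X := X)).continuous_sSup (f := h') hcont'
    simpa [image_univ, sSup_range] using this
  have hI : Continuous I := by
    have := (isCompact_univ (X := X)).continuous_sInf (f := h') hcont'
    simpa [image_univ, sInf_range] using this
  -- the averaged function, as a continuous map
  let H : C(ℝ × X, ℝ) := ⟨fun p => h' p.1 p.2, hcont'⟩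
  let Φ : C(ℝ, C(X, ℝ)) := H.curry
  have hΦint : IntervalIntegrable (fun t => Φ t) MeasureTheory.volume 0 1 :=
    Φ.continuous.intervalIntegrable 0 1
  set A : C(X, ℝ) := ∫ t in (0:ℝ)..1, Φ t with hA
  have hAx : ∀ x, A x = ∫ t in (0:ℝ)..1, h' t x := by
    intro x
    have := (ContinuousMap.evalCLM ℝ x).intervalIntegral_comp_comm hΦint
    simp [ContinuousMap.evalCLM] at this
    exact this.symm
  set av : X → ℝ := fun x => ∫ t in (0:ℝ)..1, h t x with havdef
  have hax : ∀ x, av x = A x := by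
    intro x
    rw [hAx]
    exact intervalIntegral.integral_congr fun t ht =>
      (heq t (by rwa [uIcc_of_le zero_le_one] at ht) x).symm
  have hacont : Continuous av := by
    rw [show av = fun x => A x from funext hax]
    exact A.continuous
  obtain ⟨xp, -, hxp'⟩ := isCompact_univ.exists_isMaxOn univ_nonempty hacont.continuousOn
  obtain ⟨xm, -, hxm'⟩ := isCompact_univ.exists_isMinOn univ_nonempty hacont.continuousOn
  have hxp : ∀ y : X, av y ≤ av xp := fun y => isMaxOn_iff.mp hxp' y (mem_univ y)
  have hxm : ∀ y : X, av xm ≤ av y := fun y => isMinOn_iff.mp hxm' y (mem_univ y)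
  have bdda : BddAbove (range av) := ⟨av xp, by rintro _ ⟨y, rfl⟩; exact hxp y⟩
  have bddb : BddBelow (range av) := ⟨av xm, by rintro _ ⟨y, rfl⟩; exact hxm y⟩
  have hsupav : (⨆ x, av x) = av xp :=
    le_antisymm (ciSup_le fun y => hxp y) (le_ciSup bdda xp)
  have hinfav : (⨅ x, av x) = av xm :=
    le_antisymm (ciInf_le bddb xm) (le_ciInf fun y => hxm y)
  have hh'int : ∀ x, (∫ t in (0:ℝ)..1, h' t x) = av x := fun x =>
    ((hax x).trans (hAx x)).symm
  -- Part 1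
  have part1 : ∀ x : X, (∫ t in (0:ℝ)..1, G₀ t x) = 0 := by
    intro x
    have e1 : (∫ t in (0:ℝ)..1, G₀ t x) = ∫ t in (0:ℝ)..1, (h' t x - av x) := by
      refine intervalIntegral.integral_congr fun t ht => ?_
      rw [uIcc_of_le zero_le_one] at ht
      rw [hG₀ t x, heq t ht x]
    rw [e1, intervalIntegral.integral_sub ((ctt x).intervalIntegrable 0 1)
      intervalIntegrable_const, intervalIntegral.integral_const, hh'int x]
    simp
  -- right hand side of hyp
  have hRHSf : (fun t x => h t x - G₀ t x) = fun _ x => av x := by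
    funext t x; rw [hG₀ t x]; ring
  have hRHS : hoferNorm (fun t x => h t x - G₀ t x) = (⨆ x, av x) - ⨅ x, av x := by
    rw [hRHSf]
    unfold hoferNorm
    rw [intervalIntegral.integral_const]
    simp
  have hNeq : hoferNorm h = ∫ t in (0:ℝ)..1, (S t - I t) := by
    unfold hoferNorm
    refine intervalIntegral.integral_congr fun t ht => ?_
    rw [uIcc_of_le zero_le_one] at ht
    rw [iSup_congr fun x => (heq t ht x).symm, iInf_congr fun x => (heq t ht x).symm]
  have hpoint : ∀ t ∈ Icc (0:ℝ) 1, h' t xp - h' t xm ≤ S t - I t := fun t _ =>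
    sub_le_sub (le_ciSup (bddA t) xp) (ciInf_le (bddB t) xm)
  have hupper : av xp - av xm ≤ hoferNorm h := by
    rw [hNeq, ← hh'int xp, ← hh'int xm,
      ← intervalIntegral.integral_sub ((ctt xp).intervalIntegrable 0 1)
        ((ctt xm).intervalIntegrable 0 1)]
    exact intervalIntegral.integral_mono_on zero_le_one
      (((ctt xp).sub (ctt xm)).intervalIntegrable 0 1)
      ((hS.sub hI).intervalIntegrable 0 1) hpoint
  have hlower : hoferNorm h ≤ av xp - av xm := by
    rw [hRHS, hsupav, hinfav] at hyp; exact hyp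
  have hofeq : hoferNorm h = av xp - av xm := le_antisymm hlower hupper
  have part2 : hoferNorm h = (⨆ x, av x) - (⨅ x, av x) := by
    rw [hsupav, hinfav]; exact hofeq
  -- final part
  have hintSI : (∫ t in (0:ℝ)..1, (S t - I t)) = av xp - av xm := hNeq.symm.trans hofeq
  have e2 : (∫ t in (0:ℝ)..1, (S t - h' t xp)) = (∫ t in (0:ℝ)..1, S t) - av xp := by
    rw [intervalIntegral.integral_sub (hS.intervalIntegrable 0 1)
      ((ctt xp).intervalIntegrable 0 1), hh'int xp]
  have e3 : (∫ t in (0:ℝ)..1, (h' t xm - I t)) = av xm - ∫ t in (0:ℝ)..1, I t := by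
    rw [intervalIntegral.integral_sub ((ctt xm).intervalIntegrable 0 1)
      (hI.intervalIntegrable 0 1), hh'int xm]
  have e4 : (∫ t in (0:ℝ)..1, (S t - I t))
      = (∫ t in (0:ℝ)..1, S t) - ∫ t in (0:ℝ)..1, I t :=
    intervalIntegral.integral_sub (hS.intervalIntegrable 0 1) (hI.intervalIntegrable 0 1)
  have h1 : 0 ≤ ∫ t in (0:ℝ)..1, (S t - h' t xp) :=
    intervalIntegral.integral_nonneg zero_le_one fun u _ => sub_nonneg.2 (le_ciSup (bddA u) xp)
  have h2 : 0 ≤ ∫ t in (0:ℝ)..1, (h' t xm - I t) :=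
    intervalIntegral.integral_nonneg zero_le_one fun u _ => sub_nonneg.2 (ciInf_le (bddB u) xm)
  have hz1 : (∫ t in (0:ℝ)..1, (S t - h' t xp)) = 0 := by linarith
  have hz2 : (∫ t in (0:ℝ)..1, (h' t xm - I t)) = 0 := by linarith
  have hfz := aux_int_zero (hS.sub (ctt xp))
    (fun u => sub_nonneg.2 (le_ciSup (bddA u) xp)) hz1
  have hgz := aux_int_zero ((ctt xm).sub hI)
    (fun u => sub_nonneg.2 (ciInf_le (bddB u) xm)) hz2
  refine ⟨part1, part2, xp, xm, fun t ht => ?_⟩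
  have hsup : (⨆ x, h t x) = S t := iSup_congr fun x => (heq t ht x).symm
  have hinf : (⨅ x, h t x) = I t := iInf_congr fun x => (heq t ht x).symm
  constructor
  · rw [hsup, ← heq t ht xp]
    have := hfz t ht
    simp only [Pi.sub_apply] at this
    linarith
  · rw [hinf, ← heq t ht xm]
    have := hgz t ht
    simp only [Pi.sub_apply] at this
    linarith
end
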